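/- Let (U, V, W) be a cosuspended TTF triple in a triangulated category T whose t-structure (U, V) is nondegenerate. Then the coheart 𝒞 = V ∩ W[-1] cogenerates T: if X is an object with Hom_T(X, C[k]) = 0 for all C ∈ 𝒞 and all k ∈ ℤ, then X = 0. -/

import Mathlib

open CategoryTheory Limits Pretriangulated

universe v u

variable {C : Type u} [Category.{v} C] [Preadditive C] [HasZeroObject C] [HasShift C ℤ]
  [∀ n : ℤ, (shiftFunctor C n).Additive] [Pretriangulated C]

/-- `X` is a direct summand (retract) of `Y`. -/
def IsSummand {C : Type u} [Category.{v} C] (X Y : C) : Prop :=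
  ∃ (i : X ⟶ Y) (r : Y ⟶ X), i ≫ r = 𝟙 X

/-- A torsion pair `(𝒰, 𝒱)` in a triangulated category: both classes are closed under
direct summands, all morphisms from `𝒰` to `𝒱` vanish, and every object fits
in a triangle `U ⟶ X ⟶ V ⟶ U⟦1⟧` with `U ∈ 𝒰` and `V ∈ 𝒱`. -/
structure TorsionPair (𝒰 𝒱 : Set C) : Prop where
  summand_left : ∀ ⦃X Y : C⦄, IsSummand X Y → Y ∈ 𝒰 → X ∈ 𝒰
  summand_right : ∀ ⦃X Y : C⦄, IsSummand X Y → Y ∈ 𝒱 → X ∈ 𝒱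
  hom_zero : ∀ ⦃X Y : C⦄, X ∈ 𝒰 → Y ∈ 𝒱 → ∀ f : X ⟶ Y, f = 0
  exists_triangle : ∀ X : C, ∃ (U V : C) (_ : U ∈ 𝒰) (_ : V ∈ 𝒱)
    (f : U ⟶ X) (g : X ⟶ V) (h : V ⟶ U⟦(1 : ℤ)⟧), Triangle.mk f g h ∈ distTriang C

/-!
Every `Y ∈ 𝒱` with `Y⟦n⟧ ∈ 𝒲` for some `n ≥ 1` is an iterated extension of shifts of coheart
objects, so an object `X` orthogonal to all shifts of the coheart is orthogonal to `Y`. Let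
`U ⟶ X ⟶ V ⟶ U⟦1⟧` be the truncation triangle of such an `X`. Decomposing `V` with respect to
the shifted co-t-structure `(𝒱⟦-n⟧, 𝒲⟦-n⟧)`, the map `X ⟶ V` factors through the `𝒱⟦-n⟧`-part,
which makes `V` a summand of it. Hence `V⟦n⟧ ∈ 𝒱` for all `n`, so `V = 0` by nondegeneracy and
`X ∈ 𝒰`. The hypothesis on `X` is shift-invariant, so all shifts of `X` lie in `𝒰` and `X = 0`.
-/

section

variable {D : Type*} [Category D]

lemma IsSummand.of_iso {X Y : D} (e : X ≅ Y) : IsSummand X Y :=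
  ⟨e.hom, e.inv, e.hom_inv_id⟩

lemma IsSummand.map {E : Type*} [Category E] {X Y : D} (h : IsSummand X Y) (F : D ⥤ E) :
    IsSummand (F.obj X) (F.obj Y) := by
  obtain ⟨i, r, hir⟩ := h
  exact ⟨F.map i, F.map r, by rw [← F.map_comp, hir, F.map_id]⟩

def IsClosedUnderSummands (S : Set D) : Prop :=
  ∀ ⦃X Y : D⦄, IsSummand X Y → Y ∈ S → X ∈ S

namespace IsClosedUnderSummands

variable {S : Set D}

lemma mem_of_iso (hS : IsClosedUnderSummands S) {X Y : D} (e : X ≅ Y) (hY : Y ∈ S) : X ∈ S :=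
  hS (.of_iso e) hY

variable [HasShift D ℤ]

lemma shift_shift_mem_iff (hS : IsClosedUnderSummands S) (X : D) {a b c : ℤ} (h : a + b = c) :
    X⟦a⟧⟦b⟧ ∈ S ↔ X⟦c⟧ ∈ S :=
  let e := (shiftFunctorAdd' D a b c h).app X
  ⟨hS.mem_of_iso e, hS.mem_of_iso e.symm⟩

lemma shift_shift_mem_iff_of_add_eq_zero (hS : IsClosedUnderSummands S) (X : D) {a b : ℤ}
    (h : a + b = 0) : X⟦a⟧⟦b⟧ ∈ S ↔ X ∈ S :=
  let e := (shiftFunctorCompIsoId D a b h).app X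
  ⟨hS.mem_of_iso e.symm, hS.mem_of_iso e⟩

lemma shift_mem_of_nonneg (hS : IsClosedUnderSummands S) (h1 : ∀ X ∈ S, X⟦(1 : ℤ)⟧ ∈ S)
    {n : ℤ} (hn : 0 ≤ n) {X : D} (hX : X ∈ S) : X⟦n⟧ ∈ S := by
  induction n, hn using Int.leInduction with
  | base => exact hS.mem_of_iso ((shiftFunctorZero D ℤ).app X) hX
  | succ n _ ih => exact (hS.shift_shift_mem_iff X rfl).1 (h1 _ ih)

lemma shift_mem_of_nonpos (hS : IsClosedUnderSummands S) (h1 : ∀ X ∈ S, X⟦(-1 : ℤ)⟧ ∈ S)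
    {n : ℤ} (hn : n ≤ 0) {X : D} (hX : X ∈ S) : X⟦n⟧ ∈ S := by
  induction n, hn using Int.leInductionDown with
  | base => exact hS.mem_of_iso ((shiftFunctorZero D ℤ).app X) hX
  | pred n _ ih => exact (hS.shift_shift_mem_iff X (sub_eq_add_neg n 1).symm).1 (h1 _ ih)

end IsClosedUnderSummands

variable [Preadditive D] [HasShift D ℤ]

lemma forall_eq_zero_shift_iff {X Y : D} {m n : ℤ} (hmn : m + n = 0) :
    (∀ g : X⟦m⟧ ⟶ Y, g = 0) ↔ ∀ f : X ⟶ Y⟦n⟧, f = 0 := by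
  let e := (shiftEquiv' D m n hmn).toAdjunction.homEquiv X Y
  exact ⟨fun h f => e.symm.injective ((h _).trans (h _).symm),
    fun h g => e.injective ((h _).trans (h _).symm)⟩

def IsLeftOrthogonalToShifts (S : Set D) (X : D) : Prop :=
  ∀ Y ∈ S, ∀ (k : ℤ) (f : X ⟶ Y⟦k⟧), f = 0

namespace IsLeftOrthogonalToShifts

variable {S : Set D} {X : D}

lemma eq_zero (h : IsLeftOrthogonalToShifts S X) {Y : D} (hY : Y ∈ S) (f : X ⟶ Y) : f = 0 :=
  (Preadditive.IsIso.comp_right_eq_zero f ((shiftFunctorZero D ℤ).inv.app Y)).1 (h Y hY 0 _)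

lemma shift (h : IsLeftOrthogonalToShifts S X) (m : ℤ) : IsLeftOrthogonalToShifts S (X⟦m⟧) :=
  fun Y hY k => (forall_eq_zero_shift_iff (add_neg_cancel m)).2 fun g =>
    (Preadditive.IsIso.comp_right_eq_zero g
      ((shiftFunctorAdd' D k (-m) (k - m) (sub_eq_add_neg k m).symm).inv.app Y)).1 (h Y hY _ _)

end IsLeftOrthogonalToShifts

end

lemma distTriang_mk_comp_iso {T : Triangle C} (hT : T ∈ distTriang C) {Y : C}
    (e : T.obj₂ ≅ Y) : Triangle.mk (T.mor₁ ≫ e.hom) (e.inv ≫ T.mor₂) T.mor₃ ∈ distTriang C :=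
  isomorphic_distinguished _ hT _ <| Triangle.isoMk _ _ (Iso.refl _) e.symm (Iso.refl _)
    ((Category.assoc _ _ _).trans <|
      (e.hom_inv_id ▸ Category.comp_id _).trans (Category.id_comp _).symm)
    (Category.comp_id _)
    ((congrArg _ (CategoryTheory.Functor.map_id _ _)).trans <|
      (Category.comp_id _).trans (Category.id_comp _).symm)

namespace TorsionPair

variable {𝒜 ℬ : Set C}

lemma isClosedUnderSummands_left (h : TorsionPair 𝒜 ℬ) : IsClosedUnderSummands 𝒜 :=
  h.summand_left

lemma isClosedUnderSummands_right (h : TorsionPair 𝒜 ℬ) : IsClosedUnderSummands ℬ :=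
  h.summand_right

lemma mem_left_of_forall (h : TorsionPair 𝒜 ℬ) {X : C}
    (hX : ∀ Y ∈ ℬ, ∀ f : X ⟶ Y, f = 0) : X ∈ 𝒜 := by
  obtain ⟨A, B, hA, hB, f, g, δ, hT⟩ := h.exists_triangle X
  obtain ⟨i, hi⟩ := Triangle.coyoneda_exact₂ _ hT (𝟙 X) (hX B hB _)
  exact h.summand_left ⟨i, f, hi.symm⟩ hA

lemma mem_right_of_forall (h : TorsionPair 𝒜 ℬ) {Y : C}
    (hY : ∀ X ∈ 𝒜, ∀ f : X ⟶ Y, f = 0) : Y ∈ ℬ := by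
  obtain ⟨A, B, hA, hB, f, g, δ, hT⟩ := h.exists_triangle Y
  obtain ⟨r, hr⟩ := Triangle.yoneda_exact₂ _ hT (𝟙 Y) (hY A hA _)
  exact h.summand_right ⟨g, r, hr.symm⟩ hB

lemma ext_mem_left (h : TorsionPair 𝒜 ℬ) {T : Triangle C} (hT : T ∈ distTriang C)
    (h₁ : T.obj₁ ∈ 𝒜) (h₃ : T.obj₃ ∈ 𝒜) : T.obj₂ ∈ 𝒜 := by
  refine h.mem_left_of_forall fun Y hY f => ?_
  obtain ⟨g, rfl⟩ := Triangle.yoneda_exact₂ _ hT f (h.hom_zero h₁ hY _)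
  rw [h.hom_zero h₃ hY g, comp_zero]

lemma ext_mem_right (h : TorsionPair 𝒜 ℬ) {T : Triangle C} (hT : T ∈ distTriang C)
    (h₁ : T.obj₁ ∈ ℬ) (h₃ : T.obj₃ ∈ ℬ) : T.obj₂ ∈ ℬ := by
  refine h.mem_right_of_forall fun X hX f => ?_
  obtain ⟨g, rfl⟩ := Triangle.coyoneda_exact₂ _ hT f (h.hom_zero hX h₃ _)
  rw [h.hom_zero hX h₁ g, zero_comp]

lemma shift_mem_right (h : TorsionPair 𝒜 ℬ) {m n : ℤ} (hmn : m + n = 0)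
    (hm : ∀ X ∈ 𝒜, X⟦m⟧ ∈ 𝒜) {Y : C} (hY : Y ∈ ℬ) : Y⟦n⟧ ∈ ℬ :=
  h.mem_right_of_forall fun X hX => (forall_eq_zero_shift_iff hmn).1 (h.hom_zero (hm X hX) hY)

/-- Decomposition of `Y` with respect to the shifted torsion pair `(𝒜⟦-n⟧, ℬ⟦-n⟧)`. -/
lemma exists_distTriang_shift (h : TorsionPair 𝒜 ℬ) (n : ℤ) (Y : C) :
    ∃ (P Q : C) (_ : P⟦n⟧ ∈ 𝒜) (_ : Q⟦n⟧ ∈ ℬ) (f : P ⟶ Y) (g : Y ⟶ Q)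
      (δ : Q ⟶ P⟦(1 : ℤ)⟧), Triangle.mk f g δ ∈ distTriang C := by
  obtain ⟨A, B, hA, hB, f, g, δ, hT⟩ := h.exists_triangle (Y⟦n⟧)
  exact ⟨_, _,
    (h.isClosedUnderSummands_left.shift_shift_mem_iff_of_add_eq_zero A (neg_add_cancel n)).2 hA,
    (h.isClosedUnderSummands_right.shift_shift_mem_iff_of_add_eq_zero B (neg_add_cancel n)).2 hB,
    _, _, _, distTriang_mk_comp_iso (Triangle.shift_distinguished _ hT (-n))
      ((shiftFunctorCompIsoId C n (-n) (add_neg_cancel n)).app Y)⟩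

lemma isSummand_of_mor₂_eq_comp (h : TorsionPair 𝒜 ℬ) {T : Triangle C} (hT : T ∈ distTriang C)
    (h₁ : T.obj₁ ∈ 𝒜) (h₁' : T.obj₁⟦(1 : ℤ)⟧ ∈ 𝒜) (h₃ : T.obj₃ ∈ ℬ) {B : C} (hB : B ∈ ℬ)
    (φ : T.obj₂ ⟶ B) (β : B ⟶ T.obj₃) (hφ : T.mor₂ = φ ≫ β) : IsSummand T.obj₃ B := by
  obtain ⟨ψ, rfl⟩ := Triangle.yoneda_exact₂ T hT φ (h.hom_zero h₁ hB _)
  refine ⟨ψ, β, ?_⟩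
  obtain ⟨s, hs⟩ := Triangle.yoneda_exact₃ T hT (ψ ≫ β - 𝟙 _) (by
    rw [Preadditive.comp_sub, ← Category.assoc, ← hφ, Category.comp_id, sub_self])
  rw [h.hom_zero h₁' h₃ s, comp_zero] at hs
  exact sub_eq_zero.1 hs

end TorsionPair

def coheart (𝒱 𝒲 : Set C) : Set C := {Y | Y ∈ 𝒱 ∧ Y⟦(1 : ℤ)⟧ ∈ 𝒲}

section TTF

variable {𝒰 𝒱 𝒲 : Set C}

lemma hom_eq_zero_of_mem_of_shift_mem (h₂ : TorsionPair 𝒱 𝒲)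
    (hco : ∀ X ∈ 𝒱, X⟦(-1 : ℤ)⟧ ∈ 𝒱) {n : ℤ} (hn : 1 ≤ n) {Y : C} (hYV : Y ∈ 𝒱)
    (hYW : Y⟦n⟧ ∈ 𝒲) {X : C} (hX : IsLeftOrthogonalToShifts (coheart 𝒱 𝒲) X) (f : X ⟶ Y) :
    f = 0 := by
  induction n, hn using Int.leInduction generalizing X Y with
  | base => exact hX.eq_zero ⟨hYV, hYW⟩ f
  | succ n hn ih =>
    have h𝒲 := h₂.isClosedUnderSummands_right
    obtain ⟨P, Q, hP, hQ, β, δ, γ, hT⟩ := h₂.exists_distTriang_shift 1 Y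
    have hQc : Q ∈ coheart 𝒱 𝒲 := ⟨h₂.ext_mem_left (rot_of_distTriang _ hT) hYV hP, hQ⟩
    -- the triangle `Q ⟶ P⟦1⟧ ⟶ Y⟦1⟧ ⟶ Q⟦1⟧`, shifted by `n`
    have hPW : P⟦(1 : ℤ)⟧⟦n⟧ ∈ 𝒲 := by
      refine h₂.ext_mem_right (Triangle.shift_distinguished _
        (rot_of_distTriang _ (rot_of_distTriang _ hT)) n) ?_ ?_
      · exact (h𝒲.shift_shift_mem_iff Q (by ring)).1 <| h𝒲.shift_mem_of_nonneg
          (fun _ hW => h₂.shift_mem_right (neg_add_cancel 1) hco hW) (by omega : 0 ≤ n - 1) hQ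
      · exact (h𝒲.shift_shift_mem_iff Y (add_comm 1 n)).2 hYW
    obtain ⟨φ, rfl⟩ := Triangle.coyoneda_exact₂ _ hT f (hX.eq_zero hQc _)
    have hφ : (shiftFunctor C (1 : ℤ)).map φ = 0 := ih hP hPW (hX.shift 1) _
    rw [(shiftFunctor C (1 : ℤ)).map_eq_zero_iff.1 hφ]
    exact zero_comp

lemma shift_obj₃_mem_of_isLeftOrthogonalToShifts_coheart (h₁ : TorsionPair 𝒰 𝒱)
    (h₂ : TorsionPair 𝒱 𝒲) (ht : ∀ X ∈ 𝒰, X⟦(1 : ℤ)⟧ ∈ 𝒰) (hco : ∀ X ∈ 𝒱, X⟦(-1 : ℤ)⟧ ∈ 𝒱)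
    {T : Triangle C} (hT : T ∈ distTriang C) (hU : T.obj₁ ∈ 𝒰) (hV : T.obj₃ ∈ 𝒱)
    (hX : IsLeftOrthogonalToShifts (coheart 𝒱 𝒲) T.obj₂) {n : ℤ} (hn : 1 ≤ n) :
    T.obj₃⟦n⟧ ∈ 𝒱 := by
  have h𝒱 := h₂.isClosedUnderSummands_left
  obtain ⟨P, Q, hP, hQ, β, δ, γ, hT'⟩ := h₂.exists_distTriang_shift n T.obj₃
  have hP₀ : P ∈ 𝒱 := (h𝒱.shift_shift_mem_iff_of_add_eq_zero P (add_neg_cancel n)).1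
    (h𝒱.shift_mem_of_nonpos hco (by omega) hP)
  have hP₁ : P⟦(1 : ℤ)⟧ ∈ 𝒱 := (h𝒱.shift_shift_mem_iff P (by ring : n + (1 - n) = 1)).1
    (h𝒱.shift_mem_of_nonpos hco (by omega) hP)
  have hQV : Q ∈ 𝒱 := h₂.ext_mem_left (rot_of_distTriang _ hT') hV hP₁
  obtain ⟨φ, hφ⟩ := Triangle.coyoneda_exact₂ _ hT' T.mor₂
    (hom_eq_zero_of_mem_of_shift_mem h₂ hco hn hQV hQ hX _)
  exact h𝒱 ((h₁.isSummand_of_mor₂_eq_comp hT hU (ht _ hU) hV hP₀ φ β hφ).map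
    (shiftFunctor C n)) hP

lemma mem_left_of_isLeftOrthogonalToShifts_coheart (h₁ : TorsionPair 𝒰 𝒱)
    (h₂ : TorsionPair 𝒱 𝒲) (ht : ∀ X ∈ 𝒰, X⟦(1 : ℤ)⟧ ∈ 𝒰) (hco : ∀ X ∈ 𝒱, X⟦(-1 : ℤ)⟧ ∈ 𝒱)
    (hnd₂ : ∀ X : C, (∀ n : ℤ, X⟦n⟧ ∈ 𝒱) → IsZero X) {X : C}
    (hX : IsLeftOrthogonalToShifts (coheart 𝒱 𝒲) X) : X ∈ 𝒰 := by
  obtain ⟨U, V, hU, hV, f, g, δ, hT⟩ := h₁.exists_triangle X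
  have hV₀ : IsZero V := hnd₂ V fun n => by
    rcases le_or_gt n 0 with hn | hn
    · exact h₂.isClosedUnderSummands_left.shift_mem_of_nonpos hco hn hV
    · exact shift_obj₃_mem_of_isLeftOrthogonalToShifts_coheart h₁ h₂ ht hco hT hU hV hX hn
  have : IsIso f := (Triangle.isZero₃_iff_isIso₁ _ hT).1 hV₀
  exact h₁.isClosedUnderSummands_left.mem_of_iso (asIso f).symm hU

end TTF

/-- For a cosuspended TTF triple `(𝒰, 𝒱, 𝒲)` with nondegenerate t-structure `(𝒰, 𝒱)`,
the coheart `𝒞 = 𝒱 ∩ 𝒲⟦-1⟧` cogenerates `T`: an object `X` with `Hom(X, Cc⟦k⟧) = 0` for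
all `Cc ∈ 𝒞` and all `k ∈ ℤ` is zero. -/
theorem stmt12 (𝒰 𝒱 𝒲 : Set C)
    (h₁ : TorsionPair 𝒰 𝒱) (h₂ : TorsionPair 𝒱 𝒲)
    (ht : ∀ X ∈ 𝒰, X⟦(1 : ℤ)⟧ ∈ 𝒰) (hco : ∀ X ∈ 𝒱, X⟦(-1 : ℤ)⟧ ∈ 𝒱)
    (hnd₁ : ∀ X : C, (∀ n : ℤ, X⟦n⟧ ∈ 𝒰) → IsZero X)
    (hnd₂ : ∀ X : C, (∀ n : ℤ, X⟦n⟧ ∈ 𝒱) → IsZero X)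
    (X : C)
    (hX : ∀ Cc : C, Cc ∈ 𝒱 → Cc⟦(1 : ℤ)⟧ ∈ 𝒲 → ∀ k : ℤ, ∀ f : X ⟶ Cc⟦k⟧, f = 0) :
    IsZero X := by
  have hX' : IsLeftOrthogonalToShifts (coheart 𝒱 𝒲) X := fun Y hY => hX Y hY.1 hY.2
  exact hnd₁ X fun n =>
    mem_left_of_isLeftOrthogonalToShifts_coheart h₁ h₂ ht hco hnd₂ (hX'.shift n)
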